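/- arXiv:2307.02345 — 5 statements merged into one kernel-verified Lean document; each statement's English description precedes it below -/
import Mathlib

section
/- Let S be a type (the state space), n ≥ 1, and let the action space be A = {1, …, n}. Let T : S × A → S be an injective transition map, r : S × A → ℝ a reward function, and γ ∈ (0,1) a discount factor. Let Q* : S × A → ℝ satisfy the optimal Bellman equation Q*(s,a) = r(s,a) + γ·max_{a'} Q*(T(s,a), a') for all (s,a). Let (Ω, μ) be a probability space and let (Q̂⁰(s,a))_{(s,a)∈S×A} be a family of mutually independent random variables, each Gumbel distributed with the same location λ ∈ ℝ and scale η > 0 (i.e. with CDF x ↦ exp(−exp(−(x−λ)/η))). Define recursively Q̂^{t+1}(s,a)(ω) = r(s,a) + γ·max_{a'} Q̂^{t}(T(s,a), a')(ω), and set ε^{t}(s,a) = Q̂^{t}(s,a) − Q*(s,a). Define β₁ = γ·η and β_t = γ^{t−1}·β₁ for t ≥ 1; define C₁(s,a) = γ·(λ + η·ln n) (a constant independent of (s,a)), and for t ≥ 2 define C_t(s,a) = γ·β_{t−1}·ln(∑_{i=1}^n exp((r(s',aᵢ) + C_{t−1}(s',aᵢ))/β_{t−1})) where s' = T(s,a).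 Then for every t ≥ 1 and every pair (s,a), the random variable ε^{t}(s,a) is Gumbel distributed with location C_t(s,a) − γ·max_{a'} Q*(T(s,a),a') and scale β_t, i.e. for all x ∈ ℝ, μ{ω : ε^{t}(s,a)(ω) ≤ x} = exp(−exp(−(x − C_t(s,a) + γ·max_{a'} Q*(T(s,a),a'))/β_t)). -/
/-!
Write `M^t(s) = max_a Q̂^t(s,a)`, so that `Q̂^{t+1}(s,a) = r(s,a) + γ·M^t(T(s,a))`. The
property "the `Q̂^t(p)` are independent Gumbel variables with a common scale" survives each
Bellman step: Gumbel laws of a common scale `β` are max-stable (the maximum of independent ones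
is Gumbel with scale `β` and log-sum-exp location), so the maxima over disjoint rows are again
independent Gumbels; an affine map `y ↦ c + γ·y` turns scale `β` into `γ·β`; and since `T` is
injective, `p ↦ M^t(T p)` reads each variable at most once, which keeps the family independent.
-/

open MeasureTheory Real ProbabilityTheory Function

noncomputable def gumbelCDF (m β x : ℝ) : ℝ := exp (-exp (-(x - m) / β))

lemma gumbelCDF_eq_exp_mul {β : ℝ} (hβ : β ≠ 0) (m x : ℝ) :
    gumbelCDF m β x = exp (-(exp (m / β) * exp (-x / β))) := by
  rw [gumbelCDF, ← exp_add]
  congr 3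
  field_simp
  ring

lemma gumbelCDF_add (m β x c : ℝ) : gumbelCDF m β (x + c) = gumbelCDF (m - c) β x := by
  unfold gumbelCDF
  ring_nf

lemma gumbelCDF_div {γ : ℝ} (hγ : γ ≠ 0) (m β c x : ℝ) :
    gumbelCDF m β ((x - c) / γ) = gumbelCDF (c + γ * m) (γ * β) x := by
  rw [gumbelCDF, gumbelCDF, ← div_div]
  congr 4
  field_simp
  ring

lemma prod_gumbelCDF {κ : Type*} {s : Finset κ} (hs : s.Nonempty) {β : ℝ} (hβ : β ≠ 0)
    (m : κ → ℝ) (x : ℝ) :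
    ∏ a ∈ s, gumbelCDF (m a) β x = gumbelCDF (β * log (∑ a ∈ s, exp (m a / β))) β x := by
  have hpos : 0 < ∑ a ∈ s, exp (m a / β) := Finset.sum_pos (fun a _ => exp_pos _) hs
  rw [Finset.prod_congr rfl fun a _ => gumbelCDF_eq_exp_mul hβ (m a) x, ← exp_sum,
    gumbelCDF_eq_exp_mul hβ, mul_div_cancel_left₀ _ hβ, exp_log hpos, Finset.sum_neg_distrib,
    Finset.sum_mul]

section

variable {ι κ Ω : Type*} [MeasurableSpace Ω] {μ : Measure Ω}

/-- Independent Gumbel coordinates with locations `m i` and common scale `β`, stated through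
the joint CDFs of finite subfamilies: unlike `iIndepFun`, this passes to maxima and affine images
without any measurability of `X`. -/
def HasIndepGumbelLaw (μ : Measure Ω) (X : ι → Ω → ℝ) (m : ι → ℝ) (β : ℝ) : Prop :=
  ∀ (F : Finset ι) (g : ι → ℝ),
    μ {ω | ∀ i ∈ F, X i ω ≤ g i} = ∏ i ∈ F, ENNReal.ofReal (gumbelCDF (m i) β (g i))

lemma ProbabilityTheory.iIndepFun.hasIndepGumbelLaw {X : ι → Ω → ℝ} {m : ι → ℝ} {β : ℝ}
    (hX : iIndepFun X μ)
    (hcdf : ∀ i x, μ {ω | X i ω ≤ x} = ENNReal.ofReal (gumbelCDF (m i) β x)) :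
    HasIndepGumbelLaw μ X m β := by
  intro F g
  have h := hX.measure_inter_preimage_eq_mul F (sets := fun i => Set.Iic (g i))
    fun _ _ => measurableSet_Iic
  have hev : ⋂ i ∈ F, X i ⁻¹' Set.Iic (g i) = {ω | ∀ i ∈ F, X i ω ≤ g i} := by
    ext ω
    simp
  rw [← hev, h]
  exact Finset.prod_congr rfl fun i _ => hcdf i (g i)

namespace HasIndepGumbelLaw

variable {X : ι → Ω → ℝ} {m : ι → ℝ} {β : ℝ}

lemma measure_le (h : HasIndepGumbelLaw μ X m β) (i : ι) (x : ℝ) :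
    μ {ω | X i ω ≤ x} = ENNReal.ofReal (gumbelCDF (m i) β x) := by
  simpa using h {i} fun _ => x

lemma comp {Y : κ → Ω → ℝ} {m : κ → ℝ} (h : HasIndepGumbelLaw μ Y m β) {T : ι → κ}
    (hT : Injective T) :
    HasIndepGumbelLaw μ (fun i => Y (T i)) (fun i => m (T i)) β := by
  classical
  intro F g
  have hev : {ω | ∀ i ∈ F, Y (T i) ω ≤ g i}
      = {ω | ∀ j ∈ F.image T, Y j ω ≤ extend T g 0 j} := by
    ext ω
    simp [hT.extend_apply]
  rw [hev, h, Finset.prod_image fun i _ j _ hij => hT hij]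
  simp [hT.extend_apply]

lemma const_add_mul (h : HasIndepGumbelLaw μ X m β) (c : ι → ℝ) {γ : ℝ} (hγ : 0 < γ) :
    HasIndepGumbelLaw μ (fun i ω => c i + γ * X i ω) (fun i => c i + γ * m i) (γ * β) := by
  intro F g
  have hev : {ω | ∀ i ∈ F, c i + γ * X i ω ≤ g i} = {ω | ∀ i ∈ F, X i ω ≤ (g i - c i) / γ} := by
    refine Set.ext fun ω => forall₂_congr fun i _ => ?_
    rw [le_div_iff₀ hγ]
    constructor <;> intro <;> linarith
  rw [hev, h]
  simp only [gumbelCDF_div hγ.ne']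

lemma sup' [Fintype κ] (hne : (Finset.univ : Finset κ).Nonempty) {X : ι × κ → Ω → ℝ}
    {m : ι × κ → ℝ} (h : HasIndepGumbelLaw μ X m β) (hβ : β ≠ 0) :
    HasIndepGumbelLaw μ (fun i ω => Finset.univ.sup' hne fun a => X (i, a) ω)
      (fun i => β * log (∑ a, exp (m (i, a) / β))) β := by
  intro F g
  have hev : {ω | ∀ i ∈ F, (Finset.univ.sup' hne fun a => X (i, a) ω) ≤ g i}
      = {ω | ∀ p ∈ F ×ˢ Finset.univ, X p ω ≤ g p.1} := by
    ext ω
    simp only [Finset.sup'_le_iff, Finset.mem_univ, forall_const, Set.mem_ofPred_eq,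
      Finset.mem_product, and_true, Prod.forall]
    tauto
  rw [hev, h, Finset.prod_product]
  refine Finset.prod_congr rfl fun i _ => ?_
  dsimp only
  rw [← ENNReal.ofReal_prod_of_nonneg fun _ _ => ?_, prod_gumbelCDF hne hβ]
  exact (exp_pos _).le

lemma bellman [Fintype κ] (hne : (Finset.univ : Finset κ).Nonempty) {X : ι × κ → Ω → ℝ}
    {m : ι × κ → ℝ} (h : HasIndepGumbelLaw μ X m β) (hβ : β ≠ 0) {T : ι × κ → ι}
    (hT : Injective T) (r : ι × κ → ℝ) {γ : ℝ} (hγ : 0 < γ) :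
    HasIndepGumbelLaw μ (fun p ω => r p + γ * Finset.univ.sup' hne fun a => X (T p, a) ω)
      (fun p => r p + γ * (β * log (∑ a, exp (m (T p, a) / β)))) (γ * β) :=
  ((h.sup' hne hβ).comp hT).const_add_mul r hγ

end HasIndepGumbelLaw

end

theorem bellman_iterate_error_gumbel_general
    {S : Type*} {n : ℕ}
    (hne : (Finset.univ : Finset (Fin n)).Nonempty)
    (T : S × Fin n → S) (hT : Function.Injective T)
    (r : S × Fin n → ℝ) (γ : ℝ) (hγ : γ ∈ Set.Ioo (0:ℝ) 1)
    (Qstar : S × Fin n → ℝ)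
    (hQstar : ∀ p : S × Fin n,
      Qstar p = r p + γ * (Finset.univ.sup' hne fun a' => Qstar (T p, a')))
    {Ω : Type*} [MeasurableSpace Ω] (μ : Measure Ω)
    (Qhat : ℕ → S × Fin n → Ω → ℝ)
    -- the initial values form a mutually independent family
    (hindep : iIndepFun (fun p : S × Fin n => Qhat 0 p) μ)
    -- each initial value is Gumbel with location `lam` and scale `η`
    (lam η : ℝ) (hη : 0 < η)
    (hinit : ∀ p : S × Fin n, ∀ x : ℝ,
      μ {ω | Qhat 0 p ω ≤ x} = ENNReal.ofReal (exp (-exp (-(x - lam) / η))))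
    -- the Bellman iteration
    (hiter : ∀ t : ℕ, ∀ p : S × Fin n, ∀ ω : Ω,
      Qhat (t + 1) p ω
        = r p + γ * (Finset.univ.sup' hne fun a' => Qhat t (T p, a') ω))
    -- the scale parameters `β t = γ^(t-1) · β₁` with `β₁ = γ·η`
    (β : ℕ → ℝ) (hβ : ∀ t : ℕ, 1 ≤ t → β t = γ ^ (t - 1) * (γ * η))
    -- the location parameters `C t`
    (C : ℕ → S × Fin n → ℝ)
    (hC1 : ∀ p : S × Fin n, C 1 p = γ * (lam + η * Real.log n))
    (hCt : ∀ t : ℕ, 2 ≤ t → ∀ p : S × Fin n,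
      C t p = γ * (β (t - 1) *
        Real.log (∑ i : Fin n,
          exp ((r (T p, i) + C (t - 1) (T p, i)) / β (t - 1))))) :
    ∀ t : ℕ, 1 ≤ t → ∀ p : S × Fin n, ∀ x : ℝ,
      μ {ω | Qhat t p ω - Qstar p ≤ x}
        = ENNReal.ofReal (exp (-exp (-(x -
            (C t p - γ * (Finset.univ.sup' hne fun a' => Qstar (T p, a'))))
              / β t))) := by
  obtain ⟨hγ0, -⟩ := hγ
  have bellman_step : ∀ t m b, b ≠ 0 → HasIndepGumbelLaw μ (Qhat t) m b →
      HasIndepGumbelLaw μ (Qhat (t + 1))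
        (fun p => r p + γ * (b * log (∑ a, exp (m (T p, a) / b)))) (γ * b) := fun t _ _ hb h =>
    funext₂ (hiter t) ▸ h.bellman hne hb hT r hγ0
  have law : ∀ t, 1 ≤ t → HasIndepGumbelLaw μ (Qhat t) (fun p => r p + C t p) (β t) := by
    intro t ht
    induction t, ht using Nat.le_induction with
    | base =>
      have hn0 : (n : ℝ) ≠ 0 := by simpa using hne.card_pos.ne'
      convert bellman_step 0 (fun _ => lam) η hη.ne' (hindep.hasIndepGumbelLaw hinit) using 1
      · funext p
        rw [hC1, Finset.sum_const, Finset.card_univ, Fintype.card_fin, nsmul_eq_mul,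
          log_mul hn0 (exp_pos _).ne', log_exp]
        field_simp
        ring
      · simp [hβ]
    | succ t ht ih =>
      convert bellman_step t _ _ (by rw [hβ t ht]; positivity) ih using 1
      · funext p
        rw [hCt (t + 1) (by omega), Nat.add_sub_cancel]
      · rw [hβ t ht, hβ (t + 1) (by omega), Nat.add_sub_cancel]
        nth_rw 1 [← Nat.sub_add_cancel ht]
        ring
  intro t ht p x
  have hev : {ω | Qhat t p ω - Qstar p ≤ x} = {ω | Qhat t p ω ≤ x + Qstar p} := by
    simp only [sub_le_iff_le_add]
  rw [hev, (law t ht).measure_le, gumbelCDF_add, hQstar p, gumbelCDF]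
  ring_nf

/-- Lemma 4 (distribution of the iteration error): under Gumbel initialization,
the error `ε^t(s,a) = Q̂^t(s,a) − Q*(s,a)` of the `t`-th Bellman iterate is
Gumbel distributed with location `C t (s,a) − γ · max_{a'} Q*(T(s,a), a')` and
scale `β t = γ^(t-1) · (γ·η)`. -/
theorem bellman_iterate_error_gumbel
    {S : Type*} {n : ℕ} (hn : 1 ≤ n)
    (hne : (Finset.univ : Finset (Fin n)).Nonempty)
    (T : S × Fin n → S) (hT : Function.Injective T)
    (r : S × Fin n → ℝ) (γ : ℝ) (hγ : γ ∈ Set.Ioo (0:ℝ) 1)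
    (Qstar : S × Fin n → ℝ)
    (hQstar : ∀ p : S × Fin n,
      Qstar p = r p + γ * (Finset.univ.sup' hne fun a' => Qstar (T p, a')))
    {Ω : Type*} [MeasurableSpace Ω] (μ : Measure Ω) [IsProbabilityMeasure μ]
    (Qhat : ℕ → S × Fin n → Ω → ℝ)
    -- the initial values form a mutually independent family
    (hindep : iIndepFun (fun p : S × Fin n => Qhat 0 p) μ)
    -- each initial value is Gumbel with location `lam` and scale `η`
    (lam η : ℝ) (hη : 0 < η)
    (hinit : ∀ p : S × Fin n, ∀ x : ℝ,
      μ {ω | Qhat 0 p ω ≤ x} = ENNReal.ofReal (exp (-exp (-(x - lam) / η))))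
    -- the Bellman iteration
    (hiter : ∀ t : ℕ, ∀ p : S × Fin n, ∀ ω : Ω,
      Qhat (t + 1) p ω
        = r p + γ * (Finset.univ.sup' hne fun a' => Qhat t (T p, a') ω))
    -- the scale parameters `β t = γ^(t-1) · β₁` with `β₁ = γ·η`
    (β : ℕ → ℝ) (hβ : ∀ t : ℕ, 1 ≤ t → β t = γ ^ (t - 1) * (γ * η))
    -- the location parameters `C t`
    (C : ℕ → S × Fin n → ℝ)
    (hC1 : ∀ p : S × Fin n, C 1 p = γ * (lam + η * Real.log n))
    (hCt : ∀ t : ℕ, 2 ≤ t → ∀ p : S × Fin n,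
      C t p = γ * (β (t - 1) *
        Real.log (∑ i : Fin n,
          exp ((r (T p, i) + C (t - 1) (T p, i)) / β (t - 1))))) :
    ∀ t : ℕ, 1 ≤ t → ∀ p : S × Fin n, ∀ x : ℝ,
      μ {ω | Qhat t p ω - Qstar p ≤ x}
        = ENNReal.ofReal (exp (-exp (-(x -
            (C t p - γ * (Finset.univ.sup' hne fun a' => Qstar (T p, a'))))
              / β t))) :=
  bellman_iterate_error_gumbel_general hne T hT r γ hγ Qstar hQstar μ Qhat hindep lam η hη hinit
    hiter β hβ C hC1 hCt
end

section
/- Let A > 0 and let X be a random variable with the Gumbel(A,1) density x ↦ exp(−((x−A) + exp(−(x−A)))) on ℝ. Then the expectation E[X·e^{−X}] = ∫_ℝ x·e^{−x}·exp(−((x−A) + exp(−(x−A)))) dx satisfies E[X·e^{−X}] < (3/20 + A·(20/e² + 10·exp(−e^{1/2}) + 1/2 − 1/(2e)))·e^{−A}. -/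
/-!
Substituting `t = exp (-(x - A))` turns the integral into
`exp (-A) * ∫₀^∞ (A - log t) t e^{-t} dt = exp (-A) * (A Γ(2) - Γ'(2))`, and
`Γ'(2) = 1 - γ`. Hence `E[X e^{-X}] = (A - 1 + γ) e^{-A}` exactly; the bound follows from
`γ < 2/3` and from the coefficient of `A` on the right exceeding `1`.
-/

open MeasureTheory Real Set Filter

local notation "γ" => eulerMascheroniConstant

theorem Real.hasDerivAt_Gamma_of_pos {s : ℝ} (hs : 0 < s) :
    HasDerivAt Gamma (∫ t in Ioi 0, t ^ (s - 1) * log t * exp (-t)) s := by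
  have hderiv :=
    (Complex.hasDerivAt_GammaIntegral (s := (s : ℂ)) (by simpa)).real_of_complex
  have hGamma : (fun x : ℝ => (Complex.GammaIntegral x).re) =ᶠ[nhds s] Gamma := by
    filter_upwards [lt_mem_nhds hs] with x hx
    rw [← Complex.Gamma_eq_integral (by simpa), Complex.Gamma_ofReal, Complex.ofReal_re]
  refine (hderiv.congr_of_eventuallyEq hGamma.symm).congr_deriv ?_
  rw [← Complex.ofReal_re (∫ t in Ioi 0, t ^ (s - 1) * log t * exp (-t)),
    ← integral_complex_ofReal]
  congr 1
  refine setIntegral_congr_fun measurableSet_Ioi fun t ht => ?_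
  simp only [Complex.ofReal_mul, Complex.ofReal_cpow ht.out.le, Complex.ofReal_sub,
    Complex.ofReal_one, mul_assoc]

theorem Real.hasDerivAt_Gamma_two : HasDerivAt Gamma (1 - γ) 2 := by
  simpa [add_comm, neg_add_eq_sub, one_add_one_eq_two] using hasDerivAt_Gamma_nat 1

theorem integral_mul_exp_neg_Ioi : ∫ t in Ioi 0, t * exp (-t) = 1 := by
  have h := Gamma_eq_integral two_pos
  norm_num at h
  simpa [mul_comm] using h.symm

theorem integral_mul_log_mul_exp_neg_Ioi :
    ∫ t in Ioi 0, t * log t * exp (-t) = 1 - γ := by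
  have h := hasDerivAt_Gamma_of_pos two_pos
  norm_num at h
  exact h.unique hasDerivAt_Gamma_two

theorem integrableOn_mul_log_mul_exp_neg_Ioi :
    IntegrableOn (fun t => t * log t * exp (-t)) (Ioi 0) := by
  refine Integrable.of_integral_ne_zero ?_
  rw [integral_mul_log_mul_exp_neg_Ioi]
  linarith [eulerMascheroniConstant_lt_two_thirds]

theorem integral_comp_exp_neg {E : Type*} [NormedAddCommGroup E] [NormedSpace ℝ E]
    (g : ℝ → E) : ∫ x, exp (-x) • g (exp (-x)) = ∫ t in Ioi 0, g t := by
  rw [← integral_neg_eq_self]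
  simp only [neg_neg]
  have h := integral_image_eq_integral_abs_deriv_smul MeasurableSet.univ
    (fun x _ => (hasDerivAt_exp x).hasDerivWithinAt) exp_injective.injOn g
  rw [image_univ, range_exp, Measure.restrict_univ] at h
  simpa [abs_of_pos (exp_pos _)] using h.symm

theorem integral_gumbel_mul_exp_neg (A : ℝ) :
    ∫ x, x * exp (-x) * exp (-((x - A) + exp (-(x - A)))) = (A - 1 + γ) * exp (-A) := by
  set g : ℝ → ℝ := fun t => A * (t * exp (-t)) - t * log t * exp (-t)
  have hintegrand (x : ℝ) : x * exp (-x) * exp (-((x - A) + exp (-(x - A))))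
      = exp (-A) * (exp (-(x - A)) * g (exp (-(x - A)))) := by
    have hsplit : exp (-x) = exp (-A) * exp (-(x - A)) := by rw [← exp_add]; ring_nf
    simp only [g, log_exp, hsplit, neg_add, exp_add]
    ring
  have hg : ∫ t in Ioi 0, g t = A * 1 - (1 - γ) := by
    have hmul : IntegrableOn (fun t => t * exp (-t)) (Ioi 0) :=
      .of_integral_ne_zero (by rw [integral_mul_exp_neg_Ioi]; exact one_ne_zero)
    rw [integral_sub (hmul.const_mul A) integrableOn_mul_log_mul_exp_neg_Ioi,
      integral_const_mul, integral_mul_exp_neg_Ioi, integral_mul_log_mul_exp_neg_Ioi]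
  have hsubst := integral_comp_exp_neg g
  simp only [smul_eq_mul] at hsubst
  simp_rw [hintegrand]
  rw [integral_const_mul, integral_sub_right_eq_self (fun u => exp (-u) * g (exp (-u))),
    hsubst, hg]
  ring

/-- Lemma 6(2), case `A > 0`: for `X ~ Gumbel(A,1)`, the expectation
`E[X·e^{-X}]` is bounded by
`(3/20 + A·(20/e² + 10·e^{-√e} + 1/2 − 1/(2e)))·e^{-A}`. -/
theorem gumbel_mul_exp_neg_moment_bound_pos (A : ℝ) (hA : 0 < A) :
    (∫ x : ℝ, x * exp (-x) * exp (-((x - A) + exp (-(x - A)))))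
      < (3/20 + A * (20 / exp 2 + 10 * exp (-exp (1/2)) + 1/2 - 1/(2 * exp 1)))
          * exp (-A) := by
  have hexp2 : exp 2 < 10 := by
    rw [show (2 : ℝ) = 1 + 1 by norm_num, exp_add]
    nlinarith [exp_one_lt_d9, exp_pos 1]
  have hcoeff : 1 < 20 / exp 2 + 10 * exp (-exp (1/2)) + 1/2 - 1/(2 * exp 1) := by
    have h20 : 2 < 20 / exp 2 := by rw [lt_div_iff₀ (exp_pos 2)]; linarith
    have he : 1/(2 * exp 1) < 1/2 := by
      gcongr; linarith [add_one_lt_exp (one_ne_zero (α := ℝ))]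
    linarith [exp_pos (-exp (1/2))]
  rw [integral_gumbel_mul_exp_neg]
  refine mul_lt_mul_of_pos_right ?_ (exp_pos _)
  linarith [mul_lt_mul_of_pos_left hcoeff hA, eulerMascheroniConstant_lt_two_thirds]
end

section
/- Let A ≤ 0 and let X be a random variable with the Gumbel(A,1) density x ↦ exp(−((x−A) + exp(−(x−A)))) on ℝ. Then the expectation E[X·e^{−X}] = ∫_ℝ x·e^{−x}·exp(−((x−A) + exp(−(x−A)))) dx satisfies E[X·e^{−X}] < (3/20)·e^{−A}. -/
/-!
Substituting `y = x - A` turns the integral into `e^{-A} ∫ (y + A) e^{-2y - e^{-y}} dy`, and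
`A ≤ 0` lets us drop `A`. On `y > 0` the factor `e^{-e^{-y}} ≤ 1` bounds the contribution by
`∫₀^∞ y e^{-2y} dy = 1/4`; on `y ≤ -1` the integrand is nonpositive; on `(-1, 0]` we have
`e^{-y} ≤ 3`, so that piece is at most `e^{-3} ∫_{-1}^0 y e^{-2y} dy = -(e^{-1} + e^{-3})/4`.
As `e^{-1} + e^{-3} > 2/5`, the total is below `3/20`.
-/

open MeasureTheory Real Set Filter Topology

section MulExpNegMul

variable {b : ℝ}

theorem hasDerivAt_mul_exp_neg_mul_primitive (hb : b ≠ 0) (x : ℝ) :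
    HasDerivAt (fun y => -(y / b + 1 / b ^ 2) * exp (-(b * y))) (x * exp (-(b * x))) x := by
  have hpoly : HasDerivAt (fun y => -(y / b + 1 / b ^ 2)) (-(1 / b)) x :=
    (((hasDerivAt_id' x).div_const b).add_const _).neg
  have hexp : HasDerivAt (fun y => exp (-(b * y))) (exp (-(b * x)) * -(b * 1)) x :=
    ((hasDerivAt_id' x).const_mul b).neg.exp
  refine (hpoly.mul hexp).congr_deriv ?_
  field_simp
  ring

theorem tendsto_mul_exp_neg_mul_primitive_atTop (hb : 0 < b) :
    Tendsto (fun y => -(y / b + 1 / b ^ 2) * exp (-(b * y))) atTop (𝓝 0) := by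
  have hlin := tendsto_rpow_mul_exp_neg_mul_atTop_nhds_zero 1 b hb
  have hconst := tendsto_rpow_mul_exp_neg_mul_atTop_nhds_zero 0 b hb
  have h := (hlin.const_mul (-b⁻¹)).add (hconst.const_mul (-(b ^ 2)⁻¹))
  rw [mul_zero, mul_zero, add_zero] at h
  refine h.congr fun y => ?_
  simp only [rpow_one, rpow_zero, one_mul, neg_mul]
  ring

theorem integrableOn_Ioi_mul_exp_neg_mul (hb : 0 < b) :
    IntegrableOn (fun y => y * exp (-(b * y))) (Ioi 0) :=
  integrableOn_Ioi_deriv_of_nonneg' (fun x _ => hasDerivAt_mul_exp_neg_mul_primitive hb.ne' x)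
    (fun _ hx => mul_nonneg (le_of_lt hx) (exp_pos _).le)
    (tendsto_mul_exp_neg_mul_primitive_atTop hb)

theorem integral_Ioi_mul_exp_neg_mul (hb : 0 < b) :
    ∫ y in Ioi 0, y * exp (-(b * y)) = 1 / b ^ 2 := by
  rw [integral_Ioi_of_hasDerivAt_of_nonneg'
    (fun x _ => hasDerivAt_mul_exp_neg_mul_primitive hb.ne' x)
    (fun _ hx => mul_nonneg (le_of_lt hx) (exp_pos _).le)
    (tendsto_mul_exp_neg_mul_primitive_atTop hb)]
  simp

end MulExpNegMul

theorem integrable_exp_neg_abs : Integrable fun x : ℝ => exp (-|x|) := by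
  rw [← integrableOn_univ, ← Iic_union_Ioi (a := 0)]
  refine IntegrableOn.union ?_ ?_
  · exact (integrableOn_exp_Iic 0).congr_fun
      (fun x hx => by rw [abs_of_nonpos (mem_Iic.mp hx), neg_neg]) measurableSet_Iic
  · exact (exp_neg_integrableOn_Ioi 0 one_pos).congr_fun
      (fun x hx => by simp [abs_of_pos (mem_Ioi.mp hx)]) measurableSet_Ioi

theorem exp_neg_two_mul_sub_exp_neg_le (y : ℝ) :
    exp (-(2 * y) - exp (-y)) ≤ exp 4 * exp (-(2 * |y|)) := by
  rw [← exp_add, exp_le_exp]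
  rcases le_or_gt 0 y with hy | hy
  · rw [abs_of_nonneg hy]
    linarith [exp_pos (-y)]
  · rw [abs_of_neg hy]
    -- with `t = -y > 0`: `e^t ≥ 1 + t + t^2/2 ≥ 4t - 4`
    nlinarith [quadratic_le_exp_of_nonneg (neg_nonneg.mpr hy.le), sq_nonneg (y + 3)]

theorem one_add_abs_mul_exp_neg_two_mul_sub_exp_neg_le (y : ℝ) :
    (1 + |y|) * exp (-(2 * y) - exp (-y)) ≤ exp 4 * exp (-|y|) :=
  calc (1 + |y|) * exp (-(2 * y) - exp (-y))
      ≤ exp |y| * (exp 4 * exp (-(2 * |y|))) := by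
        gcongr
        · linarith [add_one_le_exp |y|]
        · exact exp_neg_two_mul_sub_exp_neg_le y
    _ = exp 4 * exp (-|y|) := by rw [mul_left_comm, ← exp_add]; ring_nf

theorem integrable_add_mul_exp_neg_two_mul_sub_exp_neg (c : ℝ) :
    Integrable fun y => (y + c) * exp (-(2 * y) - exp (-y)) := by
  refine (integrable_exp_neg_abs.const_mul ((1 + |c|) * exp 4)).mono' (by fun_prop)
    (ae_of_all _ fun y => ?_)
  have hc : |y + c| ≤ (1 + |c|) * (1 + |y|) := by
    nlinarith [abs_add_le y c, abs_nonneg y, abs_nonneg c]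
  calc ‖(y + c) * exp (-(2 * y) - exp (-y))‖
      = |y + c| * exp (-(2 * y) - exp (-y)) := by
        rw [norm_mul, norm_of_nonneg (exp_pos _).le, norm_eq_abs]
    _ ≤ (1 + |c|) * ((1 + |y|) * exp (-(2 * y) - exp (-y))) := by
        rw [← mul_assoc]; gcongr
    _ ≤ (1 + |c|) * (exp 4 * exp (-|y|)) :=
        mul_le_mul_of_nonneg_left (one_add_abs_mul_exp_neg_two_mul_sub_exp_neg_le y)
          (by positivity)
    _ = (1 + |c|) * exp 4 * exp (-|y|) := by ring

theorem integrable_mul_exp_neg_two_mul_sub_exp_neg :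
    Integrable fun y : ℝ => y * exp (-(2 * y) - exp (-y)) := by
  simpa using integrable_add_mul_exp_neg_two_mul_sub_exp_neg 0

theorem setIntegral_Ioi_mul_exp_neg_two_mul_sub_exp_neg_le :
    ∫ y in Ioi 0, y * exp (-(2 * y) - exp (-y)) ≤ 1 / 4 :=
  calc ∫ y in Ioi 0, y * exp (-(2 * y) - exp (-y))
      ≤ ∫ y in Ioi 0, y * exp (-(2 * y)) := by
        refine setIntegral_mono_on integrable_mul_exp_neg_two_mul_sub_exp_neg.integrableOn
          (integrableOn_Ioi_mul_exp_neg_mul two_pos) measurableSet_Ioi fun y hy => ?_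
        gcongr
        · exact le_of_lt hy
        · linarith [exp_pos (-y)]
    _ = 1 / 4 := by rw [integral_Ioi_mul_exp_neg_mul two_pos]; norm_num

theorem setIntegral_Ioc_mul_exp_neg_two_mul_sub_exp_neg_le :
    ∫ y in Ioc (-1) 0, y * exp (-(2 * y) - exp (-y)) ≤ -(exp (-1) + exp (-3)) / 4 :=
  calc ∫ y in Ioc (-1) 0, y * exp (-(2 * y) - exp (-y))
      ≤ ∫ y in Ioc (-1) 0, exp (-3) * (y * exp (-(2 * y))) := by
        refine setIntegral_mono_on integrable_mul_exp_neg_two_mul_sub_exp_neg.integrableOn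
          (Continuous.integrableOn_Ioc (by fun_prop)) measurableSet_Ioc fun y hy => ?_
        have hexp : exp (-y) ≤ 3 := calc
          exp (-y) ≤ exp 1 := exp_le_exp.mpr (by linarith [hy.1])
          _ ≤ 3 := exp_one_lt_three.le
        rw [mul_left_comm, ← exp_add]
        exact mul_le_mul_of_nonpos_left (exp_le_exp.mpr (by linarith)) hy.2
    _ = -(exp (-1) + exp (-3)) / 4 := by
        rw [← intervalIntegral.integral_of_le (by norm_num), intervalIntegral.integral_const_mul,
          intervalIntegral.integral_eq_sub_of_hasDerivAt
            (fun x _ => hasDerivAt_mul_exp_neg_mul_primitive two_ne_zero x)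
            (Continuous.intervalIntegrable (by fun_prop) _ _)]
        have : exp (-3) * exp 2 = exp (-1) := by rw [← exp_add]; norm_num
        norm_num
        linear_combination (-1 / 4) * this

theorem setIntegral_Iic_mul_exp_neg_two_mul_sub_exp_neg_le :
    ∫ y in Iic 0, y * exp (-(2 * y) - exp (-y)) ≤ -(exp (-1) + exp (-3)) / 4 := by
  have hint := integrable_mul_exp_neg_two_mul_sub_exp_neg
  rw [← Iic_union_Ioc_eq_Iic (show (-1 : ℝ) ≤ 0 by norm_num),
    setIntegral_union (Iic_disjoint_Ioc le_rfl) measurableSet_Ioc hint.integrableOn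
      hint.integrableOn]
  have hleft : ∫ y in Iic (-1), y * exp (-(2 * y) - exp (-y)) ≤ 0 :=
    setIntegral_nonpos measurableSet_Iic fun y hy =>
      mul_nonpos_of_nonpos_of_nonneg (by linarith [mem_Iic.mp hy]) (exp_pos _).le
  linarith [setIntegral_Ioc_mul_exp_neg_two_mul_sub_exp_neg_le]

theorem integral_mul_exp_neg_two_mul_sub_exp_neg_lt :
    ∫ y, y * exp (-(2 * y) - exp (-y)) < 3 / 20 := by
  have hint := integrable_mul_exp_neg_two_mul_sub_exp_neg
  have hexp : 2 / 5 < exp (-1) + exp (-3) := by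
    have hexp3 : exp (-3) = exp (-1) ^ 3 := by rw [← exp_nat_mul]; norm_num
    have := exp_neg_one_gt_d9
    rw [hexp3]
    nlinarith [pow_le_pow_left₀ (by norm_num) this.le 3]
  rw [← intervalIntegral.integral_Iic_add_Ioi (b := 0) hint.integrableOn hint.integrableOn]
  linarith [setIntegral_Iic_mul_exp_neg_two_mul_sub_exp_neg_le,
    setIntegral_Ioi_mul_exp_neg_two_mul_sub_exp_neg_le]

theorem integral_gumbel_mul_exp_neg_eq (A : ℝ) :
    ∫ x, x * exp (-x) * exp (-((x - A) + exp (-(x - A))))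
      = exp (-A) * ∫ y, (y + A) * exp (-(2 * y) - exp (-y)) := by
  have hpointwise : ∀ x, x * exp (-x) * exp (-((x - A) + exp (-(x - A))))
      = exp (-A) * ((x - A + A) * exp (-(2 * (x - A)) - exp (-(x - A)))) := fun x => by
    rw [sub_add_cancel, mul_left_comm, mul_assoc, ← exp_add, ← exp_add]
    ring_nf
  simp_rw [hpointwise]
  rw [integral_const_mul,
    integral_sub_right_eq_self (fun y => (y + A) * exp (-(2 * y) - exp (-y)))]

/-- Lemma 6(2), case `A ≤ 0`: for `X ~ Gumbel(A,1)`, the expectation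
`E[X·e^{-X}]` is bounded by `(3/20)·e^{-A}`. -/
theorem gumbel_mul_exp_neg_moment_bound_nonpos (A : ℝ) (hA : A ≤ 0) :
    (∫ x : ℝ, x * exp (-x) * exp (-((x - A) + exp (-(x - A)))))
      < (3/20) * exp (-A) := by
  have hdrop :
      ∫ y, (y + A) * exp (-(2 * y) - exp (-y)) ≤ ∫ y, y * exp (-(2 * y) - exp (-y)) :=
    integral_mono (integrable_add_mul_exp_neg_two_mul_sub_exp_neg A)
      integrable_mul_exp_neg_two_mul_sub_exp_neg
      fun y => mul_le_mul_of_nonneg_right (by linarith) (exp_pos _).le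
  rw [integral_gumbel_mul_exp_neg_eq, mul_comm (3 / 20)]
  exact mul_lt_mul_of_pos_left (hdrop.trans_lt integral_mul_exp_neg_two_mul_sub_exp_neg_lt)
    (exp_pos _)
end

section
/- Let n ≥ 1, β > 0, and r₁, …, rₙ ∈ ℝ. Assume (i) there exists an index i with rᵢ > 0, and (ii) ∑_{i=1}^n exp(rᵢ/β)·rᵢ < 0. Define G(φ) = ∑_{i=1}^n exp(φ·rᵢ/β) for φ ∈ ℝ. Then there exists φ* > 1 such that ∑_{i=1}^n exp(φ*·rᵢ/β)·rᵢ = 0 and such that for every φ with 1 ≤ φ ≤ φ*, one has G(φ) ≤ G(1), i.e. ∑_{i=1}^n exp(φ·rᵢ/β) ≤ ∑_{i=1}^n exp(rᵢ/β). -/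
/-!
With `G = scaledPartition β r` and `g = scaledMoment β r` we have `β G' = g`. Each summand of `g`
is monotone in `φ` (for `φ ≤ ψ`, `exp (ψ rᵢ / β) - exp (φ rᵢ / β)` has the sign of `rᵢ`), and
the summand of a positive reward tends to `+∞`. Hence `g` is a monotone function with `g 1 < 0`
that tends to `+∞`: it has a zero `φ* > 1`, is nonpositive on `(-∞, φ*]`, and there `G` is
antitone.
-/

open Real Filter Set

variable {ι : Type*} [Fintype ι]

noncomputable def scaledPartition (β : ℝ) (r : ι → ℝ) (φ : ℝ) : ℝ := ∑ i, exp (φ * r i / β)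

noncomputable def scaledMoment (β : ℝ) (r : ι → ℝ) (φ : ℝ) : ℝ := ∑ i, exp (φ * r i / β) * r i

lemma monotone_exp_mul_div_mul {β : ℝ} (hβ : 0 ≤ β) (a : ℝ) :
    Monotone fun φ : ℝ => exp (φ * a / β) * a := by
  intro φ ψ hφψ
  rcases le_total 0 a with ha | ha
  · exact mul_le_mul_of_nonneg_right
      (exp_le_exp.2 <| div_le_div_of_nonneg_right (mul_le_mul_of_nonneg_right hφψ ha) hβ) ha
  · exact mul_le_mul_of_nonpos_right
      (exp_le_exp.2 <| div_le_div_of_nonneg_right (mul_le_mul_of_nonpos_right hφψ ha) hβ) ha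

lemma tendsto_exp_mul_div_mul_atTop {β a : ℝ} (hβ : 0 < β) (ha : 0 < a) :
    Tendsto (fun φ : ℝ => exp (φ * a / β) * a) atTop atTop := by
  refine (tendsto_exp_atTop.comp ?_).atTop_mul_const ha
  simp_rw [mul_div_assoc]
  exact tendsto_id.atTop_mul_const (div_pos ha hβ)

lemma monotone_scaledMoment {β : ℝ} (hβ : 0 ≤ β) (r : ι → ℝ) : Monotone (scaledMoment β r) :=
  fun _ _ h => Finset.sum_le_sum fun i _ => monotone_exp_mul_div_mul hβ (r i) h

lemma continuous_scaledMoment (β : ℝ) (r : ι → ℝ) : Continuous (scaledMoment β r) := by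
  unfold scaledMoment
  fun_prop

lemma tendsto_scaledMoment_atTop {β : ℝ} (hβ : 0 < β) {r : ι → ℝ} (hpos : ∃ i, 0 < r i) :
    Tendsto (scaledMoment β r) atTop atTop := by
  classical
  obtain ⟨j, hj⟩ := hpos
  have hsplit : scaledMoment β r = fun φ =>
      exp (φ * r j / β) * r j + ∑ i ∈ Finset.univ.erase j, exp (φ * r i / β) * r i := by
    ext φ
    exact (Finset.add_sum_erase _ _ (Finset.mem_univ j)).symm
  have hrest : ∀ᶠ φ in atTop, ∑ i ∈ Finset.univ.erase j, r i ≤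
      ∑ i ∈ Finset.univ.erase j, exp (φ * r i / β) * r i := by
    filter_upwards [eventually_ge_atTop 0] with φ hφ
    refine Finset.sum_le_sum fun i _ => ?_
    simpa using monotone_exp_mul_div_mul hβ.le (r i) hφ
  rw [hsplit]
  exact tendsto_atTop_add_right_of_le' _ _ (tendsto_exp_mul_div_mul_atTop hβ hj) hrest

lemma hasDerivAt_scaledPartition (β : ℝ) (r : ι → ℝ) (φ : ℝ) :
    HasDerivAt (scaledPartition β r) (scaledMoment β r φ / β) φ := by
  have hterm : ∀ i, HasDerivAt (fun ψ => exp (ψ * r i / β)) (exp (φ * r i / β) * r i / β) φ :=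
    fun i => by
      simpa [mul_div_assoc] using (((hasDerivAt_id φ).mul_const (r i)).div_const β).exp
  unfold scaledPartition scaledMoment
  rw [Finset.sum_div]
  exact HasDerivAt.fun_sum fun i _ => hterm i

lemma antitoneOn_scaledPartition {β : ℝ} (hβ : 0 < β) {r : ι → ℝ} {b : ℝ}
    (hb : scaledMoment β r b ≤ 0) : AntitoneOn (scaledPartition β r) (Iic b) := by
  refine antitoneOn_of_hasDerivWithinAt_nonpos (convex_Iic b)
    (fun φ _ => (hasDerivAt_scaledPartition β r φ).continuousAt.continuousWithinAt)
    (fun φ _ => (hasDerivAt_scaledPartition β r φ).hasDerivWithinAt) fun φ hφ => ?_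
  rw [interior_Iic] at hφ
  exact div_nonpos_of_nonpos_of_nonneg
    ((monotone_scaledMoment hβ.le r hφ.le).trans hb) hβ.le

theorem reward_scaling_upper_bound_general
    (n : ℕ) (β : ℝ) (hβ : 0 < β) (r : Fin n → ℝ)
    (hpos : ∃ i : Fin n, 0 < r i)
    (hneg : (∑ i : Fin n, exp (r i / β) * r i) < 0) :
    ∃ φstar : ℝ, 1 < φstar ∧
      (∑ i : Fin n, exp (φstar * r i / β) * r i) = 0 ∧
      ∀ φ : ℝ, 1 ≤ φ → φ ≤ φstar →
        (∑ i : Fin n, exp (φ * r i / β)) ≤ ∑ i : Fin n, exp (r i / β) := by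
  have hone : scaledMoment β r 1 < 0 := by simpa [scaledMoment] using hneg
  obtain ⟨φstar, hφstar, hzero⟩ :=
    intermediate_value_Ioi (continuous_scaledMoment β r).continuousOn
      (tendsto_scaledMoment_atTop hβ hpos) (mem_Ioi.2 hone)
  refine ⟨φstar, hφstar, hzero, fun φ h1 hφ => ?_⟩
  simpa [scaledPartition] using
    antitoneOn_scaledPartition hβ hzero.le (mem_Iic.2 hφstar.le) (mem_Iic.2 hφ) h1

/-- Theorem 2 (positive scaling upper bound): if some reward is positive and
`∑ i, exp(rᵢ/β)·rᵢ < 0`, then there is an optimal scaling ratio `φ* > 1` at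
which `∑ i, exp(φ*·rᵢ/β)·rᵢ = 0` and such that every scaling ratio
`1 ≤ φ ≤ φ*` satisfies `∑ i, exp(φ·rᵢ/β) ≤ ∑ i, exp(rᵢ/β)`. -/
theorem reward_scaling_upper_bound
    (n : ℕ) (hn : 1 ≤ n) (β : ℝ) (hβ : 0 < β) (r : Fin n → ℝ)
    (hpos : ∃ i : Fin n, 0 < r i)
    (hneg : (∑ i : Fin n, exp (r i / β) * r i) < 0) :
    ∃ φstar : ℝ, 1 < φstar ∧
      (∑ i : Fin n, exp (φstar * r i / β) * r i) = 0 ∧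
      ∀ φ : ℝ, 1 ≤ φ → φ ≤ φstar →
        (∑ i : Fin n, exp (φ * r i / β)) ≤ ∑ i : Fin n, exp (r i / β) :=
  reward_scaling_upper_bound_general n β hβ r hpos hneg
end

section
/- Let A ∈ ℝ, B > 0, and let F(t) = 1/(1 + exp(−(t−A)/B)) and f(t) = (1/B)·exp(−(t−A)/B)/(1 + exp(−(t−A)/B))² be the CDF and PDF of the Logistic(A,B) distribution. For integers N ≥ 1 and 1 ≤ i ≤ N, the expectation of the i-th order statistic of N i.i.d. Logistic(A,B) samples, namely E[x_{(i)}] = (N!/((i−1)!·(N−i)!)) · ∫_ℝ t · F(t)^{i−1} · (1−F(t))^{N−i} · f(t) dt, equals B·(∑_{k=1}^{i−1} 1/k − ∑_{k=1}^{N−i} 1/k) + A, where an empty sum is 0. -/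
/-!
Substituting `u = F(t)` turns `f(t) dt` into `du` and `t` into `A + B (log u - log (1 - u))`, so
the expectation becomes `N!/(a! b!) ∫₀¹ (A + B (log u - log (1 - u))) uᵃ (1 - u)ᵇ du` with
`a = i - 1`, `b = N - i`. Integrating the derivatives of `uᵃ⁺¹ (1 - u)ᵇ⁺¹` and
`uᵃ⁺¹ (1 - u)ᵇ log u` over `[0, 1]`, where both vanish at the endpoints, gives recurrences in `b`
solved by the Beta integral `a! b!/(a + b + 1)!` and by
`∫₀¹ uᵃ (1 - u)ᵇ log u = a! b!/(a + b + 1)! (H_a - H_{a+b+1})`. The `log (1 - u)` integral follows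
by the reflection `u ↦ 1 - u`, and the `H_{a+b+1}` terms cancel.
-/

open MeasureTheory Real Set
open scoped Nat

namespace Real

theorem log_sigmoid_sub_log_one_sub_sigmoid (x : ℝ) :
    log (sigmoid x) - log (1 - sigmoid x) = x := by
  rw [← sigmoid_neg, ← sigmoid_mul_rexp_neg, log_mul (sigmoid_pos x).ne' (exp_pos _).ne',
    log_exp]
  ring

theorem sigmoid_mul_one_sub_sigmoid (x : ℝ) :
    sigmoid x * (1 - sigmoid x) = exp (-x) / (1 + exp (-x)) ^ 2 := by
  rw [← sigmoid_neg, ← sigmoid_mul_rexp_neg, sigmoid_def]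
  field_simp

theorem integral_deriv_sigmoid_smul_comp_sigmoid {E : Type*} [NormedAddCommGroup E]
    [NormedSpace ℝ E] (g : ℝ → E) :
    ∫ x, (sigmoid x * (1 - sigmoid x)) • g (sigmoid x) = ∫ u in (0:ℝ)..1, g u := by
  have h := integral_image_eq_integral_abs_deriv_smul MeasurableSet.univ
    (fun x _ => (hasDerivAt_sigmoid x).hasDerivWithinAt) sigmoid_injective.injOn g
  rw [image_univ, range_sigmoid, setIntegral_univ] at h
  rw [intervalIntegral.integral_of_le zero_le_one, integral_Ioc_eq_integral_Ioo, h]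
  congr with x
  rw [abs_of_pos (mul_pos (sigmoid_pos x) (sub_pos.2 (sigmoid_lt_one x)))]

end Real

theorem integral_inv_smul_comp_sub_div {E : Type*} [NormedAddCommGroup E] [NormedSpace ℝ E]
    (g : ℝ → E) (A : ℝ) {B : ℝ} (hB : 0 < B) :
    ∫ t, B⁻¹ • g ((t - A) / B) = ∫ x, g x := by
  rw [integral_smul, integral_sub_right_eq_self (μ := volume) (fun t => g (t / B)) A,
    Measure.integral_comp_div, abs_of_pos hB, smul_smul, inv_mul_cancel₀ hB.ne', one_smul]

theorem hasDerivAt_pow_succ_mul_one_sub_pow (a b : ℕ) (u : ℝ) :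
    HasDerivAt (fun u : ℝ => u ^ (a + 1) * (1 - u) ^ b)
      ((a + 1) * (u ^ a * (1 - u) ^ b) - b * (u ^ (a + 1) * (1 - u) ^ (b - 1))) u := by
  have h1 := hasDerivAt_pow (a + 1) u
  have h2 : HasDerivAt (fun u : ℝ => (1 - u) ^ b) (b * (1 - u) ^ (b - 1) * -1) u :=
    (hasDerivAt_pow b (1 - u)).comp u ((hasDerivAt_id u).const_sub 1)
  refine (h1.mul h2).congr_deriv ?_
  simp only [Nat.add_sub_cancel]
  push_cast
  ring

theorem intervalIntegrable_pow_mul_one_sub_pow (a b : ℕ) :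
    IntervalIntegrable (fun u : ℝ => u ^ a * (1 - u) ^ b) volume 0 1 :=
  (by fun_prop : Continuous fun u : ℝ => u ^ a * (1 - u) ^ b).intervalIntegrable 0 1

theorem integral_pow_mul_one_sub_pow_succ (a b : ℕ) :
    ∫ u in (0:ℝ)..1, u ^ a * (1 - u) ^ (b + 1)
      = (b + 1) * (∫ u in (0:ℝ)..1, u ^ (a + 1) * (1 - u) ^ b) / (a + 1) := by
  have h₁ := (intervalIntegrable_pow_mul_one_sub_pow a (b + 1)).const_mul ((a : ℝ) + 1)
  have h₂ := (intervalIntegrable_pow_mul_one_sub_pow (a + 1) b).const_mul ((b + 1 : ℕ) : ℝ)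
  have h := intervalIntegral.integral_eq_sub_of_hasDerivAt (a := 0) (b := 1)
    (fun u _ => hasDerivAt_pow_succ_mul_one_sub_pow a (b + 1) u) (h₁.sub h₂)
  rw [Nat.add_sub_cancel, intervalIntegral.integral_sub h₁ h₂,
    intervalIntegral.integral_const_mul, intervalIntegral.integral_const_mul] at h
  simp only [sub_self, zero_pow (Nat.succ_ne_zero _), mul_zero, sub_zero] at h
  push_cast at h
  rw [eq_div_iff (by positivity)]
  linarith

theorem integral_pow_mul_one_sub_pow (a b : ℕ) :
    ∫ u in (0:ℝ)..1, u ^ a * (1 - u) ^ b = a ! * b ! / (a + b + 1) ! := by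
  induction b generalizing a with
  | zero =>
    simp only [pow_zero, mul_one, integral_pow, one_pow, zero_pow (Nat.succ_ne_zero a), sub_zero,
      Nat.factorial_zero, Nat.add_zero, Nat.factorial_succ]
    push_cast
    field_simp
  | succ b ih =>
    rw [integral_pow_mul_one_sub_pow_succ, ih, show a + 1 + b + 1 = a + (b + 1) + 1 by ring,
      Nat.factorial_succ a, Nat.factorial_succ b]
    push_cast
    field_simp

theorem intervalIntegrable_pow_mul_one_sub_pow_mul_log (a b : ℕ) :
    IntervalIntegrable (fun u : ℝ => u ^ a * (1 - u) ^ b * log u) volume 0 1 :=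
  intervalIntegral.intervalIntegrable_log'.continuousOn_mul (by fun_prop)

theorem intervalIntegrable_pow_mul_one_sub_pow_mul_log_one_sub (a b : ℕ) :
    IntervalIntegrable (fun u : ℝ => u ^ a * (1 - u) ^ b * log (1 - u)) volume 0 1 := by
  have h := (intervalIntegral.intervalIntegrable_log' (a := 1) (b := 0)).comp_sub_left 1
  rw [sub_self, sub_zero] at h
  exact h.continuousOn_mul (by fun_prop)

theorem continuous_pow_succ_mul_one_sub_pow_mul_log (a b : ℕ) :
    Continuous fun u : ℝ => u ^ (a + 1) * (1 - u) ^ b * log u := by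
  have h : (fun u : ℝ => u ^ (a + 1) * (1 - u) ^ b * log u)
      = fun u => u ^ a * (1 - u) ^ b * (u * log u) := by
    funext u; ring
  rw [h]
  exact (by fun_prop : Continuous fun u : ℝ => u ^ a * (1 - u) ^ b).mul continuous_mul_log

theorem integral_pow_mul_one_sub_pow_mul_log_recurrence (a b : ℕ) :
    ∫ u in (0:ℝ)..1, u ^ a * (1 - u) ^ b * log u
      = (b * (∫ u in (0:ℝ)..1, u ^ (a + 1) * (1 - u) ^ (b - 1) * log u)
          - ∫ u in (0:ℝ)..1, u ^ a * (1 - u) ^ b) / (a + 1) := by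
  have hderiv : ∀ u ∈ Ioo (0:ℝ) 1,
      HasDerivAt (fun u : ℝ => u ^ (a + 1) * (1 - u) ^ b * log u)
        ((a + 1) * (u ^ a * (1 - u) ^ b * log u)
          - b * (u ^ (a + 1) * (1 - u) ^ (b - 1) * log u) + u ^ a * (1 - u) ^ b) u := by
    intro u hu
    refine ((hasDerivAt_pow_succ_mul_one_sub_pow a b u).mul
      (hasDerivAt_log hu.1.ne')).congr_deriv ?_
    rw [pow_succ]
    field_simp [hu.1.ne']
  have h₁ := (intervalIntegrable_pow_mul_one_sub_pow_mul_log a b).const_mul ((a : ℝ) + 1)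
  have h₂ := (intervalIntegrable_pow_mul_one_sub_pow_mul_log (a + 1) (b - 1)).const_mul (b : ℝ)
  have h₃ := intervalIntegrable_pow_mul_one_sub_pow a b
  have h := intervalIntegral.integral_eq_sub_of_hasDerivAt_of_le zero_le_one
    (continuous_pow_succ_mul_one_sub_pow_mul_log a b).continuousOn hderiv ((h₁.sub h₂).add h₃)
  rw [intervalIntegral.integral_add (h₁.sub h₂) h₃, intervalIntegral.integral_sub h₁ h₂,
    intervalIntegral.integral_const_mul, intervalIntegral.integral_const_mul] at h
  simp only [log_one, mul_zero, log_zero, sub_zero] at h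
  rw [eq_div_iff (by positivity)]
  linarith

theorem natCast_harmonic_succ (n : ℕ) : (harmonic (n + 1) : ℝ) = harmonic n + 1 / (n + 1) := by
  simp [harmonic_succ]

theorem sum_Icc_one_div_eq_harmonic (n : ℕ) :
    ∑ k ∈ Finset.Icc 1 n, (1 : ℝ) / k = harmonic n := by
  simp [harmonic_eq_sum_Icc]

theorem integral_pow_mul_one_sub_pow_mul_log (a b : ℕ) :
    ∫ u in (0:ℝ)..1, u ^ a * (1 - u) ^ b * log u
      = a ! * b ! / (a + b + 1) ! * (harmonic a - harmonic (a + b + 1)) := by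
  induction b generalizing a with
  | zero =>
    rw [integral_pow_mul_one_sub_pow_mul_log_recurrence, integral_pow_mul_one_sub_pow,
      natCast_harmonic_succ]
    simp only [Nat.cast_zero, zero_mul, Nat.add_zero, Nat.factorial_zero, Nat.factorial_succ]
    push_cast
    field_simp
    ring
  | succ b ih =>
    rw [integral_pow_mul_one_sub_pow_mul_log_recurrence, integral_pow_mul_one_sub_pow,
      Nat.add_sub_cancel, ih, natCast_harmonic_succ,
      show a + 1 + b + 1 = a + (b + 1) + 1 by ring, Nat.factorial_succ a, Nat.factorial_succ b]
    push_cast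
    field_simp
    ring

theorem integral_pow_mul_one_sub_pow_mul_log_one_sub (a b : ℕ) :
    ∫ u in (0:ℝ)..1, u ^ a * (1 - u) ^ b * log (1 - u)
      = a ! * b ! / (a + b + 1) ! * (harmonic b - harmonic (a + b + 1)) := by
  have h := intervalIntegral.integral_comp_sub_left (fun v : ℝ => v ^ b * (1 - v) ^ a * log v)
    (a := 0) (b := 1) 1
  simp only [sub_sub_cancel, sub_zero, sub_self] at h
  rw [add_comm a b, mul_comm (a ! : ℝ), ← integral_pow_mul_one_sub_pow_mul_log, ← h]
  congr with u
  ring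

theorem integral_logit_mul_pow_mul_one_sub_pow (A B : ℝ) (a b : ℕ) :
    ∫ u in (0:ℝ)..1, (A + B * (log u - log (1 - u))) * (u ^ a * (1 - u) ^ b)
      = a ! * b ! / (a + b + 1) ! * (A + B * (harmonic a - harmonic b)) := by
  have hβ := intervalIntegrable_pow_mul_one_sub_pow a b
  have hJ := (intervalIntegrable_pow_mul_one_sub_pow_mul_log a b).const_mul B
  have hJ' := (intervalIntegrable_pow_mul_one_sub_pow_mul_log_one_sub a b).const_mul B
  have hsplit : ∀ u : ℝ, (A + B * (log u - log (1 - u))) * (u ^ a * (1 - u) ^ b)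
      = A * (u ^ a * (1 - u) ^ b) + (B * (u ^ a * (1 - u) ^ b * log u)
        - B * (u ^ a * (1 - u) ^ b * log (1 - u))) := fun u => by ring
  simp_rw [hsplit]
  rw [intervalIntegral.integral_add (hβ.const_mul A) (hJ.sub hJ'),
    intervalIntegral.integral_sub hJ hJ', intervalIntegral.integral_const_mul,
    intervalIntegral.integral_const_mul, intervalIntegral.integral_const_mul,
    integral_pow_mul_one_sub_pow, integral_pow_mul_one_sub_pow_mul_log,
    integral_pow_mul_one_sub_pow_mul_log_one_sub]
  ring

theorem integral_logistic_order_statistic_eq_integral_logit (A : ℝ) {B : ℝ} (hB : 0 < B)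
    (a b : ℕ) :
    ∫ t : ℝ, t * (1 / (1 + exp (-(t - A) / B))) ^ a * (1 - 1 / (1 + exp (-(t - A) / B))) ^ b
        * ((1 / B) * exp (-(t - A) / B) / (1 + exp (-(t - A) / B)) ^ 2)
      = ∫ u in (0:ℝ)..1, (A + B * (log u - log (1 - u))) * (u ^ a * (1 - u) ^ b) := by
  rw [← integral_deriv_sigmoid_smul_comp_sigmoid]
  conv_rhs => rw [← integral_inv_smul_comp_sub_div _ A hB]
  congr with t
  have ht : t = A + B * ((t - A) / B) := by field_simp; ring
  rw [log_sigmoid_sub_log_one_sub_sigmoid, sigmoid_mul_one_sub_sigmoid, sigmoid_def,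
    smul_eq_mul, smul_eq_mul, neg_div, ← ht]
  ring

/-- Theorem 3: the expectation of the `i`-th order statistic of `N` i.i.d.
`Logistic(A,B)` samples equals `B·(∑_{k=1}^{i−1} 1/k − ∑_{k=1}^{N−i} 1/k) + A`. -/
theorem logistic_order_statistic_expectation
    (A B : ℝ) (hB : 0 < B) (N i : ℕ) (hi1 : 1 ≤ i) (hiN : i ≤ N) :
    ((N.factorial : ℝ) / ((i - 1).factorial * (N - i).factorial))
        * ∫ t : ℝ, t * (1 / (1 + exp (-(t - A) / B))) ^ (i - 1)
            * (1 - 1 / (1 + exp (-(t - A) / B))) ^ (N - i)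
            * ((1 / B) * exp (-(t - A) / B) / (1 + exp (-(t - A) / B)) ^ 2)
      = B * ((∑ k ∈ Finset.Icc 1 (i - 1), (1 : ℝ) / k)
              - ∑ k ∈ Finset.Icc 1 (N - i), (1 : ℝ) / k) + A := by
  have hN : i - 1 + (N - i) + 1 = N := by omega
  rw [integral_logistic_order_statistic_eq_integral_logit A hB,
    integral_logit_mul_pow_mul_one_sub_pow, hN, sum_Icc_one_div_eq_harmonic,
    sum_Icc_one_div_eq_harmonic]
  field_simp
  ring
end
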